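/- Let L ∈ T. Then the core L_c is a perfect ideal of L, i.e., [L_c, L_c] = L_c and [L, L_c] ⊆ L_c. -/

import Mathlib

open scoped Classical

namespace Gen

variable (F L : Type*) [Field F] [CharZero F] [LieRing L] [LieAlgebra F L]

/-- The weight space of a linear functional `α` on a subalgebra `H`. -/
def wt (H : LieSubalgebra F L) (α : Module.Dual F H) : Submodule F L where
  carrier := {x : L | ∀ h : H, ⁅(h : L), x⁆ = α h • x}
  add_mem' := by
    intro a b ha hb h
    rw [lie_add, ha h, hb h, smul_add]
  zero_mem' := by intro h; simp
  smul_mem' := by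
    intro c x hx h
    rw [lie_smul, hx h, smul_comm]

/-- Data for axioms (T1) and (T2): a non-degenerate symmetric invariant bilinear form,
a finite dimensional split toral subalgebra `H` on which the form is non-degenerate,
together with the representatives `t_α ∈ H` of linear functionals on `H`. -/
structure TData where
  B : L →ₗ[F] L →ₗ[F] F
  bsymm : ∀ x y, B x y = B y x
  binv : ∀ x y z, B ⁅x, y⁆ z = B x ⁅y, z⁆
  bnondeg : ∀ x, (∀ y, B x y = 0) → x = 0
  H : LieSubalgebra F L
  hne : H ≠ ⊥
  hfin : FiniteDimensional F H
  hnondeg : ∀ h : H, (∀ h' : H, B h h' = 0) → h = 0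
  decomp : DirectSum.IsInternal (wt F L H)
  t : Module.Dual F H → H
  tspec : ∀ (α : Module.Dual F H) (h : H), B (t α) h = α h

variable {F L}

namespace TData

variable (T : TData F L)

/-- The form transferred to the dual of `H`: `(α, β) = (t_α, t_β)`. -/
def pr (α β : Module.Dual F T.H) : F := T.B (T.t α) (T.t β)

/-- The root system `R = {α : L_α ≠ 0}`. -/
def R : Set (Module.Dual F T.H) := {α | wt F L T.H α ≠ ⊥}

/-- Non-isotropic roots. -/
def Rx : Set (Module.Dual F T.H) := {α | α ∈ T.R ∧ T.pr α α ≠ 0}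

/-- Isotropic roots. -/
def R0 : Set (Module.Dual F T.H) := {α | α ∈ T.R ∧ T.pr α α = 0}

/-- The core: the subalgebra generated by the non-isotropic root spaces. -/
def core : LieSubalgebra F L :=
  LieSubalgebra.lieSpan F L (⋃ α ∈ T.Rx, (wt F L T.H α : Set L))

end TData

variable (F L)

/-- A Lie algebra in the class 𝒯: axioms (T1)–(T6). -/
structure TAlg extends TData F L where
  t3a : ∀ δ ∈ toTData.R0, ∃ x ∈ wt F L toTData.H δ, ∃ y ∈ wt F L toTData.H (-δ),
          ⁅x, y⁆ = (toTData.t δ : L)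
  t3b : ∀ α ∈ toTData.Rx, ∀ x ∈ wt F L toTData.H α, x ≠ 0 →
          ∃ y ∈ wt F L toTData.H (-α), ⁅x, y⁆ = (toTData.t α : L)
  t4 : ∀ α ∈ toTData.Rx, ∀ x ∈ wt F L toTData.H α, ∀ y : L,
          ∃ n : ℕ, ((LieAlgebra.ad F L x) ^ n) y = 0
  t5a : ∀ S1 S2 : Set (Module.Dual F toTData.H), S1.Nonempty → S2.Nonempty →
          S1 ∪ S2 = toTData.Rx → Disjoint S1 S2 →
          ∃ a ∈ S1, ∃ b ∈ S2, toTData.pr a b ≠ 0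
  t5b : ∀ δ ∈ toTData.R0, ∃ α ∈ toTData.Rx, α + δ ∈ toTData.R
  t6free : Module.Free ℤ (AddSubgroup.closure toTData.R0)
  t6fin : Module.Finite ℤ (AddSubgroup.closure toTData.R0)

end Gen

/-!
The ideal property is checked on generators: for a weight vector `x ∈ L_μ` and `e ∈ L_γ` with
`γ ∈ R^×`, either `μ` or `μ + γ` is non-isotropic, and then `⁅x, e⁆` visibly lies in `L_c`, or
both are isotropic roots with `(μ, μ + γ) = -(γ, γ) / 2 ≠ 0`. The latter is impossible: for
isotropic roots `μ, ν` with `(μ, ν) ≠ 0`, the Heisenberg triple `[u, v] = t_μ` from (T3) shows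
that the `μ`- or the `(-μ)`-string through `ν` is unbounded, and a long isotropic string contains
`β = ν + 2μ` and `ν + 3μ` with `2 (ν + 3μ, β) / (β, β) = 5 / 2`, contradicting the
`sl₂`-integrality coming from (T3) and (T4). Perfectness follows from `[[z, f], z] = (α, α) z`
for `z ∈ L_α`, `α ∈ R^×`, with `f ∈ L_{-α}` as in (T3).
-/

namespace Gen

open LieAlgebra

section String

variable (R : Type*) {L : Type*} [CommRing R] [LieRing L] [LieAlgebra R L]

theorem ad_pow_succ_apply (e x : L) (n : ℕ) :
    (ad R L e ^ (n + 1)) x = ⁅e, (ad R L e ^ n) x⁆ := by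
  rw [pow_succ', Module.End.mul_apply, ad_apply]

variable {R}

/-- The `sl₂`-string computation, doubled so that it holds over any commutative ring. -/
theorem two_smul_lie_ad_pow_succ {e f v : L} {c a : R} (hv : ⁅e, v⁆ = 0)
    (hh : ∀ j : ℕ, ⁅⁅e, f⁆, (ad R L f ^ j) v⁆ = (c - j * a) • (ad R L f ^ j) v) (j : ℕ) :
    (2 : R) • ⁅e, (ad R L f ^ (j + 1)) v⁆ = ((j + 1) * (2 * c - j * a)) • (ad R L f ^ j) v := by
  induction j with
  | zero =>
    rw [ad_pow_succ_apply, pow_zero, Module.End.one_apply, leibniz_lie, hv, lie_zero, add_zero]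
    simpa [smul_smul] using congrArg ((2 : R) • ·) (hh 0)
  | succ j ih =>
    rw [ad_pow_succ_apply R f v (j + 1), leibniz_lie, smul_add, hh (j + 1), ← lie_smul, ih,
      lie_smul, ← ad_pow_succ_apply, smul_smul, ← add_smul]
    congr 1
    push_cast
    ring

end String

section Field

variable {K L : Type*} [Field K] [CharZero K] [LieRing L] [LieAlgebra K L]

theorem two_mul_eq_mul_of_ad_pow_succ_eq_zero {e f v : L} {c a : K} (hv : ⁅e, v⁆ = 0)
    (hh : ∀ j : ℕ, ⁅⁅e, f⁆, (ad K L f ^ j) v⁆ = (c - j * a) • (ad K L f ^ j) v) {m : ℕ}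
    (hm : (ad K L f ^ m) v ≠ 0) (hm' : (ad K L f ^ (m + 1)) v = 0) : 2 * c = m * a := by
  have h := two_smul_lie_ad_pow_succ hv hh m
  rw [hm', lie_zero, smul_zero, eq_comm, smul_eq_zero] at h
  have hcoeff := h.resolve_right hm
  rw [mul_eq_zero, or_iff_right (Nat.cast_add_one_ne_zero m)] at hcoeff
  linear_combination hcoeff

theorem ad_pow_apply_ne_zero_of_lie_eq_smul {e f v : L} {c : K} (hc : c ≠ 0) (hv0 : v ≠ 0)
    (hv : ⁅e, v⁆ = 0) (hh : ∀ j : ℕ, ⁅⁅e, f⁆, (ad K L f ^ j) v⁆ = c • (ad K L f ^ j) v)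
    (j : ℕ) : (ad K L f ^ j) v ≠ 0 := by
  induction j with
  | zero => simpa using hv0
  | succ j ih =>
    intro hj
    have h := two_smul_lie_ad_pow_succ (c := c) (a := 0) hv (by simpa using hh) j
    rw [hj, lie_zero, smul_zero, eq_comm, smul_eq_zero] at h
    exact h.elim (by simp [hc, Nat.cast_add_one_ne_zero]) ih

end Field

theorem exists_pow_apply_ne_zero_pow_succ_apply_eq_zero {R M : Type*} [Semiring R]
    [AddCommMonoid M] [Module R M] {φ : Module.End R M} {x : M} (hx : x ≠ 0)
    (h : ∃ n, (φ ^ n) x = 0) : ∃ k, (φ ^ k) x ≠ 0 ∧ (φ ^ (k + 1)) x = 0 :=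
  Nat.exists_not_and_succ_of_not_zero_of_exists (by simpa using hx) h

section WeightSpace

variable {F L : Type*} [Field F] [LieRing L] [LieAlgebra F L] {H : LieSubalgebra F L}

theorem lie_mem_wt {α β : Module.Dual F H} {x y : L} (hx : x ∈ wt F L H α)
    (hy : y ∈ wt F L H β) : ⁅x, y⁆ ∈ wt F L H (α + β) := by
  intro h
  rw [leibniz_lie, hx h, hy h, smul_lie, lie_smul, LinearMap.add_apply, add_smul]

theorem ad_pow_apply_mem_wt {β δ : Module.Dual F H} {e x : L} (he : e ∈ wt F L H β)
    (hx : x ∈ wt F L H δ) (n : ℕ) : (ad F L e ^ n) x ∈ wt F L H (δ + (n : F) • β) := by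
  induction n with
  | zero => simpa using hx
  | succ n ih =>
    rw [ad_pow_succ_apply]
    convert lie_mem_wt he ih using 2
    push_cast
    module

end WeightSpace

namespace TData

variable {F L : Type*} [Field F] [LieRing L] [LieAlgebra F L] (T : TData F L)

theorem pr_eq_apply (α β : Module.Dual F T.H) : T.pr α β = α (T.t β) := T.tspec α (T.t β)

theorem pr_comm (α β : Module.Dual F T.H) : T.pr α β = T.pr β α := T.bsymm _ _

@[simp]
theorem pr_add_left (α β γ : Module.Dual F T.H) : T.pr (α + β) γ = T.pr α γ + T.pr β γ := by
  simp [pr_eq_apply]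

@[simp]
theorem pr_smul_left (c : F) (α β : Module.Dual F T.H) : T.pr (c • α) β = c * T.pr α β := by
  simp [pr_eq_apply]

@[simp]
theorem pr_neg_left (α β : Module.Dual F T.H) : T.pr (-α) β = -T.pr α β := by
  simp [pr_eq_apply]

@[simp]
theorem pr_add_right (α β γ : Module.Dual F T.H) : T.pr α (β + γ) = T.pr α β + T.pr α γ := by
  rw [pr_comm, pr_add_left, T.pr_comm β, T.pr_comm γ]

@[simp]
theorem pr_smul_right (c : F) (α β : Module.Dual F T.H) : T.pr α (c • β) = c * T.pr α β := by
  rw [pr_comm, pr_smul_left, T.pr_comm β]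

@[simp]
theorem pr_neg_right (α β : Module.Dual F T.H) : T.pr α (-β) = -T.pr α β := by
  rw [pr_comm, pr_neg_left, T.pr_comm β]

theorem lie_t_eq_smul {δ : Module.Dual F T.H} {y : L} (hy : y ∈ wt F L T.H δ)
    (β : Module.Dual F T.H) : ⁅(T.t β : L), y⁆ = T.pr δ β • y := by
  rw [hy, pr_eq_apply]

theorem coe_t_ne_zero {α : Module.Dual F T.H} (hα : T.pr α α ≠ 0) : (T.t α : L) ≠ 0 := by
  intro h
  apply hα
  simp [pr, h]

theorem mem_core_of_mem_wt {α : Module.Dual F T.H} (hα : T.pr α α ≠ 0) {x : L}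
    (hx : x ∈ wt F L T.H α) : x ∈ T.core := by
  rcases eq_or_ne x 0 with rfl | hx0
  · exact T.core.zero_mem
  · exact LieSubalgebra.subset_lieSpan
      (Set.mem_biUnion ⟨(Submodule.ne_bot_iff _).mpr ⟨x, hx, hx0⟩, hα⟩ hx)

end TData

namespace TAlg

variable {F L : Type*} [Field F] [LieRing L] [LieAlgebra F L] (T : TAlg F L)

theorem neg_mem_Rx {α : Module.Dual F T.H} (hα : α ∈ T.Rx) : -α ∈ T.Rx := by
  obtain ⟨e, he, he0⟩ := (Submodule.ne_bot_iff _).mp hα.1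
  obtain ⟨f, hf, hef⟩ := T.t3b α hα e he he0
  refine ⟨(Submodule.ne_bot_iff _).mpr ⟨f, hf, ?_⟩, by simpa using hα.2⟩
  rintro rfl
  exact T.coe_t_ne_zero hα.2 (by rw [← hef, lie_zero])

theorem mem_span_lie_core_of_mem_wt {α : Module.Dual F T.H} (hα : α ∈ T.Rx) {z : L}
    (hz : z ∈ wt F L T.H α) :
    z ∈ Submodule.span F {w : L | ∃ x ∈ T.core, ∃ y ∈ T.core, ⁅x, y⁆ = w} := by
  rcases eq_or_ne z 0 with rfl | hz0
  · exact Submodule.zero_mem _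
  obtain ⟨f, hf, hzf⟩ := T.t3b α hα z hz hz0
  have hzc := T.mem_core_of_mem_wt hα.2 hz
  have hfc := T.mem_core_of_mem_wt (T.neg_mem_Rx hα).2 hf
  have hzfz : ⁅⁅z, f⁆, z⁆ = T.pr α α • z := by rw [hzf, T.lie_t_eq_smul hz]
  rw [← Submodule.smul_mem_iff _ hα.2, ← hzfz]
  exact Submodule.subset_span ⟨_, T.core.lie_mem hzc hfc, z, hzc, rfl⟩

variable [CharZero F]

theorem exists_int_two_mul_pr_eq {β β' : Module.Dual F T.H} (hβ : β ∈ T.Rx) (hβ' : β' ∈ T.R) :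
    ∃ z : ℤ, 2 * T.pr β' β = z * T.pr β β := by
  obtain ⟨e, he, he0⟩ := (Submodule.ne_bot_iff _).mp hβ.1
  obtain ⟨x, hx, hx0⟩ := (Submodule.ne_bot_iff _).mp hβ'
  obtain ⟨f, hf, hef⟩ := T.t3b β hβ e he he0
  -- a highest vector `v` of the `β`-string through `x`, and the lowest vector of the `f`-string
  -- through `v`
  obtain ⟨p, hv0, hev⟩ :=
    exists_pow_apply_ne_zero_pow_succ_apply_eq_zero hx0 (T.t4 β hβ e he x)
  have hv := ad_pow_apply_mem_wt he hx p
  obtain ⟨m, hm, hm'⟩ :=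
    exists_pow_apply_ne_zero_pow_succ_apply_eq_zero hv0 (T.t4 (-β) (T.neg_mem_Rx hβ) f hf _)
  have h := two_mul_eq_mul_of_ad_pow_succ_eq_zero (c := T.pr β' β + p * T.pr β β) (a := T.pr β β)
    (by rwa [ad_pow_succ_apply] at hev) (fun j => ?_) hm hm'
  · exact ⟨m - 2 * p, by push_cast; linear_combination h⟩
  · rw [hef, T.lie_t_eq_smul (ad_pow_apply_mem_wt hf hv j)]
    congr 1
    simp
    ring

theorem exists_add_smul_notMem_R {μ ν : Module.Dual F T.H} (hμ : T.pr μ μ = 0)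
    (hν : T.pr ν ν = 0) (hνμ : T.pr ν μ ≠ 0) : ∃ k : ℕ, ν + (k : F) • μ ∉ T.R := by
  by_contra! h
  have h2 : T.pr (ν + (2 : F) • μ) (ν + (2 : F) • μ) = 4 * T.pr ν μ := by
    simp [hμ, hν, T.pr_comm μ ν]
    ring
  have h32 : T.pr (ν + (3 : F) • μ) (ν + (2 : F) • μ) = 5 * T.pr ν μ := by
    simp [hμ, hν, T.pr_comm μ ν]
    ring
  obtain ⟨z, hz⟩ := T.exists_int_two_mul_pr_eq
    ⟨by simpa using h 2, by simp [h2, hνμ]⟩ (by simpa using h 3)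
  rw [h2, h32] at hz
  have hz' : ((10 : ℤ) : F) = ((z * 4 : ℤ) : F) :=
    mul_right_cancel₀ hνμ (by push_cast; linear_combination hz)
  have : (10 : ℤ) = z * 4 := Int.cast_injective hz'
  omega

theorem pr_eq_zero_of_mem_R0 {μ ν : Module.Dual F T.H} (hμ : μ ∈ T.R0) (hν : ν ∈ T.R0) :
    T.pr μ ν = 0 := by
  by_contra hμν
  have hνμ : T.pr ν μ ≠ 0 := by rwa [T.pr_comm]
  obtain ⟨u, hu, v, hv, huv⟩ := T.t3a μ hμ
  obtain ⟨y, hy, hy0⟩ := (Submodule.ne_bot_iff _).mp hν.1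
  by_cases hdown : ∀ n, (ad F L v ^ n) y ≠ 0
  · obtain ⟨k, hk⟩ := T.exists_add_smul_notMem_R (μ := -μ) (by simpa using hμ.2) hν.2
      (by simpa using hνμ)
    exact hk ((Submodule.ne_bot_iff _).mpr ⟨_, ad_pow_apply_mem_wt hv hy k, hdown k⟩)
  -- on the lowest vector `z` of the `v`-string through `y`, `⁅v, u⁆ = -t_μ` acts by the nonzero
  -- scalar `-(ν, μ)`, so the `u`-string through `z` never stops
  obtain ⟨m, hz0, hvz⟩ :=
    exists_pow_apply_ne_zero_pow_succ_apply_eq_zero hy0 (not_forall_not.mp hdown)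
  have hz := ad_pow_apply_mem_wt hv hy m
  have hup := ad_pow_apply_ne_zero_of_lie_eq_smul (f := u) (neg_ne_zero.mpr hνμ) hz0
    (by rwa [ad_pow_succ_apply] at hvz) (fun j => ?_)
  · obtain ⟨k, hk⟩ := T.exists_add_smul_notMem_R hμ.2 hν.2 hνμ
    refine hk ((Submodule.ne_bot_iff _).mpr ⟨_, ?_, hup (m + k)⟩)
    convert ad_pow_apply_mem_wt hu hz (m + k) using 2
    push_cast
    module
  · rw [← lie_skew v u, huv, neg_lie, T.lie_t_eq_smul (ad_pow_apply_mem_wt hu hz j)]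
    simp [hμ.2, neg_smul]

theorem lie_mem_core_of_mem_wt_of_mem_wt {μ γ : Module.Dual F T.H} (hγ : γ ∈ T.Rx) {x e : L}
    (hx : x ∈ wt F L T.H μ) (he : e ∈ wt F L T.H γ) : ⁅x, e⁆ ∈ T.core := by
  by_cases hμγ : T.pr (μ + γ) (μ + γ) = 0
  swap
  · exact T.mem_core_of_mem_wt hμγ (lie_mem_wt hx he)
  by_cases hμ : T.pr μ μ = 0
  swap
  · exact T.core.lie_mem (T.mem_core_of_mem_wt hμ hx) (T.mem_core_of_mem_wt hγ.2 he)
  by_contra hxe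
  have hxe0 : ⁅x, e⁆ ≠ 0 := fun h => hxe (h ▸ T.core.zero_mem)
  have hx0 : x ≠ 0 := by rintro rfl; exact hxe0 (zero_lie e)
  have hortho := T.pr_eq_zero_of_mem_R0 ⟨(Submodule.ne_bot_iff _).mpr ⟨x, hx, hx0⟩, hμ⟩
    ⟨(Submodule.ne_bot_iff _).mpr ⟨_, lie_mem_wt hx he, hxe0⟩, hμγ⟩
  simp only [TData.pr_add_left, TData.pr_add_right, T.pr_comm γ μ] at hortho hμγ
  exact hγ.2 (by linear_combination hμγ - 2 * hortho + hμ)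

theorem lie_mem_core_of_mem_wt {μ : Module.Dual F T.H} {x y : L} (hx : x ∈ wt F L T.H μ)
    (hy : y ∈ T.core) : ⁅x, y⁆ ∈ T.core := by
  induction hy using LieSubalgebra.lieSpan_induction with
  | mem e he =>
    obtain ⟨γ, hγ, he⟩ := Set.mem_iUnion₂.mp he
    exact T.lie_mem_core_of_mem_wt_of_mem_wt hγ hx he
  | zero => simp
  | add y z _ _ hy hz => simpa using T.core.add_mem hy hz
  | smul c y _ hy => simpa using T.core.smul_mem c hy
  | lie y z hy' hz' hy hz =>
    rw [leibniz_lie]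
    exact T.core.add_mem (T.core.lie_mem hy hz') (T.core.lie_mem hy' hz)

theorem lie_mem_core (x : L) {y : L} (hy : y ∈ T.core) : ⁅x, y⁆ ∈ T.core := by
  have hx : x ∈ ⨆ μ, wt F L T.H μ := by
    simp [T.decomp.submodule_iSup_eq_top]
  refine Submodule.iSup_induction _ (motive := fun x => ⁅x, y⁆ ∈ T.core) hx ?_ ?_ ?_
  · exact fun μ x hx => T.lie_mem_core_of_mem_wt hx hy
  · simp
  · exact fun x z hx hz => by simpa using T.core.add_mem hx hz

end TAlg

end Gen

/-- For `L ∈ 𝒯`, the core `L_c` is a perfect ideal of `L`: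
`[L, L_c] ⊆ L_c` and `[L_c, L_c] = L_c`. -/
theorem core_perfect_ideal
    (F L : Type*) [Field F] [CharZero F] [LieRing L] [LieAlgebra F L]
    (T : Gen.TAlg F L) :
    (∀ x : L, ∀ y ∈ T.toTData.core, ⁅x, y⁆ ∈ T.toTData.core) ∧
    (Submodule.span F {z : L | ∃ x ∈ T.toTData.core, ∃ y ∈ T.toTData.core, ⁅x, y⁆ = z}
      = (T.toTData.core : Submodule F L)) := by
  refine ⟨fun x y hy => T.lie_mem_core x hy, le_antisymm ?_ ?_⟩
  · rw [Submodule.span_le]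
    rintro _ ⟨x, hx, y, hy, rfl⟩
    exact T.core.lie_mem hx hy
  · intro w hw
    rw [LieSubalgebra.mem_toSubmodule] at hw
    induction hw using LieSubalgebra.lieSpan_induction with
    | mem z hz =>
      obtain ⟨α, hα, hz⟩ := Set.mem_iUnion₂.mp hz
      exact T.mem_span_lie_core_of_mem_wt hα hz
    | zero => exact Submodule.zero_mem _
    | add y z _ _ hy hz => exact Submodule.add_mem _ hy hz
    | smul c y _ hy => exact Submodule.smul_mem _ c hy
    | lie y z hy hz _ _ => exact Submodule.subset_span ⟨y, hy, z, hz, rfl⟩
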